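/- If Ω₂·α + β < Ω₂·γ + δ where α, γ < ε₀, β, δ < Ω₂, and β = ξ·β' with β' < Ω₁·ω^γ + ω^(ω^γ)·δ and ξ < ω^(ω^γ), then Ω₁·ω^α + ω^(ω^α)·β < Ω₁·ω^γ + ω^(ω^γ)·δ. -/

import Mathlib

open Ordinal Cardinal

/-! Write `e = ω^(ω^γ)` and `T = Ω₁·ω^γ + e·δ`. Comparing the leading `Ω₂`-digits gives `α ≤ γ`;
if `α = γ` then `β < δ` and we are done. If `α < γ`, the term `Ω₁·ω^α` is absorbed by `Ω₁·ω^γ`,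
so it suffices that `ω^(ω^α)·β < T`. Since `e < Ω₁` and `Ω₁` is multiplicatively principal,
`e·Ω₁ = Ω₁`, hence `T = e·(Ω₁·ω^γ + δ)`; and `ω^(ω^α)·β = (ω^(ω^α)·ξ)·β'` with
`ω^(ω^α)·ξ < e`, a factor which `e·(…)` absorbs on the left, while `β' < T`. -/

/-- The least ordinal `ε` with `ω^ε = ε`. -/
noncomputable def eps0 : Ordinal := Ordinal.nfp (fun a => omega0 ^ a) 0

/-- The first uncountable ordinal. -/
noncomputable def Omega1 : Ordinal := (aleph 1).ord

/-- The second uncountable ordinal. -/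
noncomputable def Omega2 : Ordinal := (aleph 2).ord

theorem isPrincipal_mul_Omega1 : IsPrincipal (· * ·) Omega1 :=
  isPrincipal_mul_ord (aleph0_le_aleph 1)

theorem omega0_opow_lt_Omega1 {a : Ordinal} (ha : a < Omega1) : ω ^ a < Omega1 :=
  isPrincipal_opow_ord (aleph0_le_aleph 1) (omega0_lt_ord.2 aleph0_lt_aleph_one) ha

theorem eps0_lt_Omega1 : eps0 < Omega1 :=
  nfp_lt_ord_of_isRegular isRegular_aleph_one aleph0_lt_aleph_one.ne'
    (fun _ => omega0_opow_lt_Omega1) (lt_ord.2 (by simp))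

theorem le_of_mul_add_lt_mul_add {x a b c d : Ordinal} (hd : d < x)
    (h : x * a + b < x * c + d) : a ≤ c := by
  by_contra! hca
  refine lt_asymm h ?_
  calc x * c + d < x * c + x := add_lt_add_right hd _
    _ = x * (c + 1) := by rw [mul_add_one]
    _ ≤ x * a := mul_le_mul_right (Order.add_one_le_of_lt hca) _
    _ ≤ x * a + b := le_self_add

theorem mul_lt_mul_of_isPrincipal_mul {e a b d : Ordinal} (he : IsPrincipal (· * ·) e)
    (ha : a < e) (hb : b < e * d) : a * b < e * d := by
  rcases eq_zero_or_pos a with rfl | ha₀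
  · simpa using pos_of_gt hb
  calc a * b < a * (e * d) := mul_lt_mul_of_pos_left hb ha₀
    _ = e * d := by rw [← mul_assoc, isPrincipal_mul_iff_mul_left_eq.1 he a ha₀ ha]

theorem stmt11_general (α β γ δ ξ β' : Ordinal) (hγ : γ < eps0)
    (hδ : δ < Omega2)
    (h : Omega2 * α + β < Omega2 * γ + δ)
    (hfact : β = ξ * β')
    (hβ' : β' < Omega1 * omega0 ^ γ + omega0 ^ (omega0 ^ γ) * δ)
    (hξ : ξ < omega0 ^ (omega0 ^ γ)) :
    Omega1 * omega0 ^ α + omega0 ^ (omega0 ^ α) * β <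
      Omega1 * omega0 ^ γ + omega0 ^ (omega0 ^ γ) * δ := by
  have he : ω ^ ω ^ γ < Omega1 :=
    omega0_opow_lt_Omega1 (omega0_opow_lt_Omega1 (hγ.trans eps0_lt_Omega1))
  have hT : Omega1 * ω ^ γ + ω ^ ω ^ γ * δ = ω ^ ω ^ γ * (Omega1 * ω ^ γ + δ) := by
    rw [mul_add, ← mul_assoc,
      isPrincipal_mul_iff_mul_left_eq.1 isPrincipal_mul_Omega1 _ (opow_pos _ omega0_pos) he]
  rcases (le_of_mul_add_lt_mul_add hδ h).lt_or_eq with hαγ | rfl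
  · have hωαγ : ω ^ α < ω ^ γ := (opow_lt_opow_iff_right one_lt_omega0).2 hαγ
    have hβT : ω ^ ω ^ α * β < Omega1 * ω ^ γ + ω ^ ω ^ γ * δ := by
      rw [hfact, ← mul_assoc, hT]
      have hη : ω ^ ω ^ α * ξ < ω ^ ω ^ γ := isPrincipal_mul_omega0_opow_opow γ
        ((opow_lt_opow_iff_right one_lt_omega0).2 hωαγ) hξ
      exact mul_lt_mul_of_isPrincipal_mul (isPrincipal_mul_omega0_opow_opow γ) hη (hT ▸ hβ')
    calc _ < Omega1 * ω ^ α + (Omega1 * ω ^ γ + ω ^ ω ^ γ * δ) := add_lt_add_right hβT _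
      _ = _ := by rw [← add_assoc, ← mul_add, add_omega0_opow hωαγ]
  · exact add_lt_add_right
      (mul_lt_mul_of_pos_left ((add_lt_add_iff_left _).1 h) (opow_pos _ omega0_pos)) _

/-- If `Ω₂·α + β < Ω₂·γ + δ` with `α, γ < ε₀`, `β, δ < Ω₂`, and `β = ξ·β'` with
`β' < Ω₁·ω^γ + ω^(ω^γ)·δ` and `ξ < ω^(ω^γ)`, then
`Ω₁·ω^α + ω^(ω^α)·β < Ω₁·ω^γ + ω^(ω^γ)·δ`. -/
theorem stmt11 (α β γ δ ξ β' : Ordinal) (hα : α < eps0) (hγ : γ < eps0)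
    (hβ : β < Omega2) (hδ : δ < Omega2)
    (h : Omega2 * α + β < Omega2 * γ + δ)
    (hfact : β = ξ * β')
    (hβ' : β' < Omega1 * omega0 ^ γ + omega0 ^ (omega0 ^ γ) * δ)
    (hξ : ξ < omega0 ^ (omega0 ^ γ)) :
    Omega1 * omega0 ^ α + omega0 ^ (omega0 ^ α) * β <
      Omega1 * omega0 ^ γ + omega0 ^ (omega0 ^ γ) * δ :=
  stmt11_general α β γ δ ξ β' hγ hδ h hfact hβ' hξ
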